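/- arXiv:quant-ph/0102132 — 2 statements merged into one kernel-verified Lean document; each statement's English description precedes it below -/
import Mathlib

section
/- Let G : (0,∞) → ℝ be smooth and suppose that for all commuting diagonal D = Diag(p_1,…,p_n), A, B the second derivative ∂²/∂t∂s|_{t=s=0} Tr G(D+tA+sB) equals the Fisher metric Tr(D⁻¹AB). Then G''(x) = 1/x, hence G(x) = x log x + Cx + D' for constants C, D'. -/
open Set in
private lemma constOn_of_deriv_zero (f : ℝ → ℝ) (hf : DifferentiableOn ℝ f (Set.Ioi 0))
    (h0 : ∀ x ∈ Set.Ioi (0:ℝ), deriv f x = 0) :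
    ∀ x ∈ Set.Ioi (0:ℝ), f x = f 1 := by
  intro x hx
  refine (convex_Ioi (0:ℝ)).is_const_of_fderivWithin_eq_zero hf ?_ hx (by norm_num)
  intro z hz
  rw [fderivWithin_of_isOpen isOpen_Ioi hz, ← toSpanSingleton_deriv, h0 z hz]
  ext; simp

/-- If `G` is smooth on `(0,∞)` and for all diagonal (hence commuting)
`D = Diag p`, `A = Diag a`, `B = Diag b` with `p i > 0` one has
`∂²/∂t∂s|₀ Tr G(D+tA+sB) = Tr(D⁻¹AB)`, then `G''(x) = 1/x` and
`G(x) = x log x + C x + D'` for constants `C`, `D'`. -/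
theorem stmt13 (G : ℝ → ℝ) (hG : ContDiffOn ℝ (⊤ : ℕ∞) G (Set.Ioi 0))
    (hfisher : ∀ (n : ℕ) (p a b : Fin n → ℝ), (∀ i, 0 < p i) →
      deriv (fun t => deriv (fun s => ∑ i, G (p i + t * a i + s * b i)) 0) 0
        = ∑ i, a i * b i / p i) :
    (∀ x > 0, deriv (deriv G) x = 1 / x) ∧
      ∃ C D' : ℝ, ∀ x > 0, G x = x * Real.log x + C * x + D' := by
  have key : ∀ x > 0, deriv (deriv G) x = 1 / x := by
    intro x hx
    have h := hfisher 1 (fun _ => x) (fun _ => 1) (fun _ => 1) (fun _ => hx)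
    simp only [Fin.sum_univ_one, mul_one, one_mul] at h
    have h1 : ∀ t : ℝ, deriv (fun s => G (x + t + s)) 0 = deriv G (t + x) := by
      intro t
      have : (fun s : ℝ => G (x + t + s)) = fun s => G (s + (x + t)) := by
        funext s; ring_nf
      rw [this, deriv_comp_add_const]
      ring_nf
    have h2 : (fun t : ℝ => deriv (fun s => G (x + t + s)) 0)
        = fun t => deriv G (t + x) := funext h1
    rw [h2, deriv_comp_add_const, zero_add] at h
    exact h
  refine ⟨key, ?_⟩
  -- differentiability facts
  have hGd : DifferentiableOn ℝ G (Set.Ioi 0) := hG.differentiableOn (by simp)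
  have hG' : ContDiffOn ℝ (⊤ : ℕ∞) (deriv G) (Set.Ioi 0) :=
    hG.deriv_of_isOpen isOpen_Ioi (by simp)
  have hG'd : DifferentiableOn ℝ (deriv G) (Set.Ioi 0) := hG'.differentiableOn (by simp)
  have hGat : ∀ x ∈ Set.Ioi (0:ℝ), DifferentiableAt ℝ G x := fun x hx =>
    (hGd x hx).differentiableAt (isOpen_Ioi.mem_nhds hx)
  have hG'at : ∀ x ∈ Set.Ioi (0:ℝ), DifferentiableAt ℝ (deriv G) x := fun x hx =>
    (hG'd x hx).differentiableAt (isOpen_Ioi.mem_nhds hx)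
  -- step 1 : deriv G x = log x + C on Ioi 0
  set f : ℝ → ℝ := fun x => deriv G x - Real.log x with hf
  have hfd : DifferentiableOn ℝ f (Set.Ioi 0) :=
    hG'd.sub (fun x hx => (Real.differentiableAt_log (ne_of_gt hx)).differentiableWithinAt)
  have hfc : ∀ x ∈ Set.Ioi (0:ℝ), f x = f 1 := by
    refine constOn_of_deriv_zero f hfd ?_
    intro x hx
    have : deriv f x = deriv (deriv G) x - deriv Real.log x := by
      apply deriv_sub (hG'at x hx) (Real.differentiableAt_log (ne_of_gt hx))
    rw [this, key x hx, Real.deriv_log]; simp [one_div]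
  have hderivG : ∀ x ∈ Set.Ioi (0:ℝ), deriv G x = Real.log x + (deriv G 1) := by
    intro x hx
    have := hfc x hx
    simp only [hf, Real.log_one, sub_zero] at this
    linarith
  -- step 2 : G x = x log x + C x + D'
  set C : ℝ := deriv G 1 - 1 with hC
  set g : ℝ → ℝ := fun x => G x - (x * Real.log x + C * x) with hg
  have hgd : DifferentiableOn ℝ g (Set.Ioi 0) := by
    apply hGd.sub
    intro x hx
    exact (((differentiableAt_fun_id.mul (Real.differentiableAt_log (ne_of_gt hx))).add
      ((differentiableAt_const C).mul differentiableAt_fun_id)).differentiableWithinAt)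
  have hgc : ∀ x ∈ Set.Ioi (0:ℝ), g x = g 1 := by
    refine constOn_of_deriv_zero g hgd ?_
    intro x hx
    have hx' : (0:ℝ) < x := hx
    have hd2 : DifferentiableAt ℝ (fun x : ℝ => x * Real.log x + C * x) x :=
      (differentiableAt_fun_id.mul (Real.differentiableAt_log (ne_of_gt hx'))).add
        ((differentiableAt_const C).mul differentiableAt_fun_id)
    have : deriv g x = deriv G x - deriv (fun x : ℝ => x * Real.log x + C * x) x :=
      deriv_sub (hGat x hx) hd2
    rw [this, hderivG x hx]
    have hlog : deriv (fun x : ℝ => x * Real.log x + C * x) x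
        = (Real.log x + 1) + C := by
      rw [deriv_fun_add (differentiableAt_fun_id.fun_mul (Real.differentiableAt_log (ne_of_gt hx')))
        ((differentiableAt_const C).fun_mul differentiableAt_fun_id)]
      rw [deriv_fun_mul differentiableAt_fun_id (Real.differentiableAt_log (ne_of_gt hx'))]
      rw [deriv_const_mul _ differentiableAt_fun_id]
      simp [Real.deriv_log, mul_inv_cancel₀ (ne_of_gt hx')]
    rw [hlog, hC]; ring
  refine ⟨C, G 1 - C, ?_⟩
  intro x hx
  have := hgc x hx
  simp only [hg, Real.log_one, mul_zero, mul_one, one_mul, zero_add] at this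
  linarith
end

section
/- Let f : (0,∞) → (0,∞) with f(0⁺) := lim_{t→0⁺} f(t) existing. For D = Diag(λ_1,…,λ_n) with λ_1 the largest eigenvalue, and lifted horizontal tangent vectors Ā, B̄ with entries (λ_1 − λ_i)u_i, (λ_1 − λ_i)v_i in the first row/column, the metric value g_D(Ā,B̄) = 2 Re Σ_{i=2}^n ((λ_1−λ_i)²/(f(λ_i/λ_1)λ_1)) u_i v̄_i converges, as λ_1 → 1 and λ_i → 0 for i ≥ 2, to (2/f(0⁺)) Re Σ_{i=2}^n u_i v̄_i if f(0⁺) ≠ 0, and diverges (for some nonzero u = v) if f(0⁺) = 0. -/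
/-!
As `λ₁ → 1` the other eigenvalues tend to `0`, so each weight `(λ₁ - λᵢ)² / (f (λᵢ/λ₁) λ₁)`
has numerator tending to `1` and denominator tending to `f(0⁺)`. If `f(0⁺) ≠ 0` every weight
tends to `1 / f(0⁺)`; if `f(0⁺) = 0` the denominators tend to `0⁺` because `f > 0`, so the
weights blow up, and `u = v = (1, …, 1)` makes the metric a sum of these positive weights.
-/

open Filter Finset

/-- The lifted-metric value `g_D(Ā, B̄) = 2 Re ∑_{i≥2} ((λ₁−λᵢ)²/(f(λᵢ/λ₁)λ₁)) uᵢ v̄ᵢ`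
for eigenvalues `λ` (index `0` being the largest) and horizontal data `u`, `v`. -/
noncomputable def liftedMetric (n : ℕ) (f : ℝ → ℝ) (l : Fin (n + 2) → ℝ)
    (u v : Fin (n + 2) → ℂ) : ℝ :=
  2 * (∑ i ∈ Finset.univ.filter (fun i : Fin (n + 2) => i ≠ 0),
        (((l 0 - l i) ^ 2 / (f (l i / l 0) * l 0) : ℝ) : ℂ) *
          (u i * (starRingEnd ℂ) (v i))).re

open Topology

theorem tendsto_apply_nhds_zero_of_sum_eq_one {α ι : Type*} [Fintype ι] {p : Filter α}
    {l : α → ι → ℝ} (hnonneg : ∀ a i, 0 ≤ l a i) (hsum : ∀ a, ∑ i, l a i = 1) {i₀ : ι}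
    (hi₀ : Tendsto (fun a => l a i₀) p (𝓝 1)) {i : ι} (hi : i ≠ i₀) :
    Tendsto (fun a => l a i) p (𝓝 0) := by
  classical
  have hle : ∀ a, l a i ≤ 1 - l a i₀ := fun a => by
    have := single_le_sum (fun j _ => hnonneg a j) (mem_erase.2 ⟨hi, mem_univ i⟩)
    linarith [add_sum_erase univ (l a) (mem_univ i₀), hsum a]
  exact squeeze_zero (hnonneg · i) hle (by simpa using hi₀.const_sub 1)

/-- The weight of `uᵢ v̄ᵢ` in `liftedMetric`, with `a = λ₁` and `b = λᵢ`. -/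
noncomputable def liftedCoeff (f : ℝ → ℝ) (a b : ℝ) : ℝ := (a - b) ^ 2 / (f (b / a) * a)

theorem liftedCoeff_nonneg {f : ℝ → ℝ} (hfpos : ∀ t > 0, 0 < f t) {a b : ℝ} (ha : 0 < a)
    (hb : 0 < b) : 0 ≤ liftedCoeff f a b :=
  div_nonneg (sq_nonneg _) (mul_pos (hfpos _ (div_pos hb ha)) ha).le

section Asymptotics

variable {α : Type*} {p : Filter α} {f : ℝ → ℝ} {L : ℝ} {a b : α → ℝ}

theorem tendsto_liftedCoeff_denom (hf : Tendsto f (𝓝[>] 0) (𝓝 L)) (ha : Tendsto a p (𝓝 1))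
    (hb : Tendsto b p (𝓝 0)) (hpos : ∀ᶠ x in p, 0 < b x / a x) :
    Tendsto (fun x => f (b x / a x) * a x) p (𝓝 L) := by
  have hratio : Tendsto (fun x => b x / a x) p (𝓝[>] 0) :=
    tendsto_nhdsWithin_iff.2 ⟨zero_div (1 : ℝ) ▸ hb.div ha one_ne_zero, hpos⟩
  simpa using (hf.comp hratio).mul ha

theorem tendsto_liftedCoeff_of_ne_zero (hf : Tendsto f (𝓝[>] 0) (𝓝 L)) (hL : L ≠ 0)
    (ha : Tendsto a p (𝓝 1)) (hb : Tendsto b p (𝓝 0)) (hpos : ∀ᶠ x in p, 0 < b x / a x) :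
    Tendsto (fun x => liftedCoeff f (a x) (b x)) p (𝓝 L⁻¹) := by
  have hnum : Tendsto (fun x => (a x - b x) ^ 2) p (𝓝 1) := by simpa using (ha.sub hb).pow 2
  exact one_div L ▸ hnum.div (tendsto_liftedCoeff_denom hf ha hb hpos) hL

/-- Since `f > 0`, the denominator `f (b / a) a` tends to `0` from above. -/
theorem tendsto_liftedCoeff_atTop (hf : Tendsto f (𝓝[>] 0) (𝓝 0)) (hfpos : ∀ t > 0, 0 < f t)
    (ha : Tendsto a p (𝓝 1)) (hb : Tendsto b p (𝓝 0)) (ha' : ∀ᶠ x in p, 0 < a x)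
    (hpos : ∀ᶠ x in p, 0 < b x / a x) :
    Tendsto (fun x => liftedCoeff f (a x) (b x)) p atTop := by
  have hdenom : Tendsto (fun x => f (b x / a x) * a x) p (𝓝[>] 0) := by
    refine tendsto_nhdsWithin_iff.2 ⟨tendsto_liftedCoeff_denom hf ha hb hpos, ?_⟩
    filter_upwards [ha', hpos] with x hax hx using mul_pos (hfpos _ hx) hax
  have hnum : Tendsto (fun x => (a x - b x) ^ 2) p (𝓝 1) := by simpa using (ha.sub hb).pow 2
  simpa [liftedCoeff, div_eq_mul_inv] using
    hnum.pos_mul_atTop one_pos (tendsto_inv_nhdsGT_zero.comp hdenom)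

end Asymptotics

theorem tendsto_re_sum_ofReal_mul {α ι : Type*} {p : Filter α} {s : Finset ι}
    {c : α → ι → ℝ} {r : ℝ} (hc : ∀ i ∈ s, Tendsto (c · i) p (𝓝 r)) (w : ι → ℂ) :
    Tendsto (fun x => (∑ i ∈ s, (c x i : ℂ) * w i).re) p (𝓝 (r * (∑ i ∈ s, w i).re)) := by
  have := (Complex.continuous_re.tendsto _).comp <| tendsto_finsetSum s fun i hi =>
    ((Complex.continuous_ofReal.tendsto _).comp (hc i hi)).mul_const (w i)
  simpa [Function.comp_def, ← mul_sum, Complex.re_ofReal_mul] using this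

theorem liftedMetric_one (n : ℕ) (f : ℝ → ℝ) (l : Fin (n + 2) → ℝ) :
    liftedMetric n f l 1 1 = 2 * ∑ i ∈ univ.filter (· ≠ 0), liftedCoeff f (l 0) (l i) := by
  simp only [liftedMetric, liftedCoeff, Pi.one_apply, map_one, mul_one, Complex.re_sum,
    Complex.ofReal_re]

theorem stmt18_general (n : ℕ) (f : ℝ → ℝ) (hfpos : ∀ t > 0, 0 < f t)
    (L : ℝ) (hL : Tendsto f (nhdsWithin 0 (Set.Ioi 0)) (nhds L))
    (l : ℕ → Fin (n + 2) → ℝ)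
    (hpos : ∀ m i, 0 < l m i) (hsum : ∀ m, ∑ i, l m i = 1)
    (htop : Tendsto (fun m => l m 0) atTop (nhds 1)) :
    (L ≠ 0 → ∀ u v : Fin (n + 2) → ℂ,
      Tendsto (fun m => liftedMetric n f (l m) u v) atTop
        (nhds ((2 / L) * (∑ i ∈ Finset.univ.filter (fun i : Fin (n + 2) => i ≠ 0),
            u i * (starRingEnd ℂ) (v i)).re))) ∧
    (L = 0 → ∃ u : Fin (n + 2) → ℂ, u ≠ 0 ∧
      Tendsto (fun m => liftedMetric n f (l m) u u) atTop atTop) := by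
  have hsmall : ∀ i ≠ (0 : Fin (n + 2)), Tendsto (fun m => l m i) atTop (𝓝 0) := fun i hi =>
    tendsto_apply_nhds_zero_of_sum_eq_one (fun m i => (hpos m i).le) hsum htop hi
  have hratio : ∀ m i, 0 < l m i / l m 0 := fun m i => div_pos (hpos m i) (hpos m 0)
  refine ⟨fun hL0 u v => ?_, fun hL0 => ⟨1, one_ne_zero, ?_⟩⟩
  · have hcoeff : ∀ i ∈ univ.filter (· ≠ 0), Tendsto (fun m => liftedCoeff f (l m 0) (l m i))
        atTop (𝓝 L⁻¹) := fun i hi => tendsto_liftedCoeff_of_ne_zero hL hL0 htop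
          (hsmall i (mem_filter.1 hi).2) (.of_forall (hratio · i))
    have := (tendsto_re_sum_ofReal_mul hcoeff fun i => u i * starRingEnd ℂ (v i)).const_mul 2
    rwa [← mul_assoc, ← div_eq_mul_inv] at this
  · have hone : (1 : Fin (n + 2)) ∈ univ.filter (· ≠ 0) := by simp
    have hblowup := tendsto_liftedCoeff_atTop (hL0 ▸ hL) hfpos htop (hsmall 1 one_ne_zero)
      (.of_forall (hpos · 0)) (.of_forall (hratio · 1))
    refine tendsto_atTop_mono (fun m => ?_) (hblowup.const_mul_atTop two_pos)
    rw [liftedMetric_one]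
    gcongr
    exact single_le_sum (f := fun i => liftedCoeff f (l m 0) (l m i))
      (fun i _ => liftedCoeff_nonneg hfpos (hpos m 0) (hpos m i)) hone

/-- Along a sequence of eigenvalue tuples with `λ₁ → 1` (so `λᵢ → 0` for
`i ≥ 2`), the lifted metric converges to `(2/f(0⁺)) Re ∑ uᵢ v̄ᵢ` (a multiple of the
Fubini–Study metric) iff `f(0⁺) ≠ 0`; if `f(0⁺) = 0` it diverges for some `u = v ≠ 0`. -/
theorem stmt18 (n : ℕ) (f : ℝ → ℝ) (hfpos : ∀ t > 0, 0 < f t)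
    (L : ℝ) (hL : Tendsto f (nhdsWithin 0 (Set.Ioi 0)) (nhds L))
    (l : ℕ → Fin (n + 2) → ℝ)
    (hpos : ∀ m i, 0 < l m i) (hsum : ∀ m, ∑ i, l m i = 1)
    (hmax : ∀ m, ∀ i : Fin (n + 2), i ≠ 0 → l m i < l m 0)
    (htop : Tendsto (fun m => l m 0) atTop (nhds 1)) :
    (L ≠ 0 → ∀ u v : Fin (n + 2) → ℂ,
      Tendsto (fun m => liftedMetric n f (l m) u v) atTop
        (nhds ((2 / L) * (∑ i ∈ Finset.univ.filter (fun i : Fin (n + 2) => i ≠ 0),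
            u i * (starRingEnd ℂ) (v i)).re))) ∧
    (L = 0 → ∃ u : Fin (n + 2) → ℂ, u ≠ 0 ∧
      Tendsto (fun m => liftedMetric n f (l m) u u) atTop atTop) :=
  stmt18_general n f hfpos L hL l hpos hsum htop
end
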